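/- arXiv:2512.06626 — 2 statements merged into one kernel-verified Lean document; each statement's English description precedes it below -/
import Mathlib

section
/- Let B(W,U) be the bilinear form B({w,q},{u,p}) = (ρ/Δt)(w,u) − α(∇·w, p) + α(q, ∇·u) + (ρ/Δt)(w, u') − α(∇q, u') where the fine-scale model is u' = −(τ Δt/ρ)((ρ/Δt)u + α∇p) with τ = 1/2. Then for any pair W = {w,q} with w ∈ H¹₀(Ω)³ and q ∈ H¹(Ω), B(W,W) = (1/2)(ρ/Δt)‖w‖²_{L²} + (1/2)(Δt/ρ)α²‖∇q‖²_{L²}; in particular B is positive semidefinite and vanishes only if w = 0 and ∇q = 0. -/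
open MeasureTheory

set_option maxHeartbeats 1000000

/-- with `τ = 1/2` and the fine-scale model
`u' = −(τΔt/ρ)((ρ/Δt)w + α ∇q)`, the Darcy-type VMS bilinear form satisfies
`B(W,W) = ½(ρ/Δt)‖w‖² + ½(Δt/ρ)α²‖∇q‖²`; in particular it is nonnegative and
vanishes only if `w = 0` and `∇q = 0` (a.e.).  Here `w : Ω → ℝ³` is the (H¹₀)
velocity test function with divergence `dw = ∇·w`, `q` the pressure test
function with gradient `gq = ∇q`, and the integration-by-parts identity
`(∇·w, q) = −(w, ∇q)` is supplied as a hypothesis. -/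
theorem vms_bilinear_form_stability
    (Ω : Set (EuclideanSpace ℝ (Fin 3))) (hΩ : MeasurableSet Ω)
    (ρ Δt α : ℝ) (hρ : 0 < ρ) (hΔt : 0 < Δt) (hα : α ≠ 0)
    (w gq : EuclideanSpace ℝ (Fin 3) → EuclideanSpace ℝ (Fin 3))
    (dw q : EuclideanSpace ℝ (Fin 3) → ℝ)
    (u' : EuclideanSpace ℝ (Fin 3) → EuclideanSpace ℝ (Fin 3))
    (hu' : u' = fun x => (-(1/2 : ℝ) * Δt / ρ) • ((ρ / Δt) • w x + α • gq x))
    (hww : IntegrableOn (fun x => ‖w x‖ ^ 2) Ω)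
    (hgg : IntegrableOn (fun x => ‖gq x‖ ^ 2) Ω)
    (hwg : IntegrableOn (fun x => inner ℝ (w x) (gq x) : _ → ℝ) Ω)
    (hdwq : IntegrableOn (fun x => dw x * q x) Ω)
    (hIBP : (∫ x in Ω, dw x * q x) = -∫ x in Ω, (inner ℝ (w x) (gq x) : ℝ))
    (B : ℝ)
    (hB : B = (ρ / Δt) * (∫ x in Ω, (inner ℝ (w x) (w x) : ℝ))
        - α * (∫ x in Ω, dw x * q x)
        + α * (∫ x in Ω, q x * dw x)
        + (ρ / Δt) * (∫ x in Ω, (inner ℝ (w x) (u' x) : ℝ))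
        - α * (∫ x in Ω, (inner ℝ (gq x) (u' x) : ℝ))) :
    B = (1/2) * (ρ / Δt) * (∫ x in Ω, ‖w x‖ ^ 2)
        + (1/2) * (Δt / ρ) * α ^ 2 * (∫ x in Ω, ‖gq x‖ ^ 2) ∧
    0 ≤ B ∧
    (B = 0 → (∀ᵐ x ∂(volume.restrict Ω), w x = 0)
        ∧ (∀ᵐ x ∂(volume.restrict Ω), gq x = 0)) := by
  set c : ℝ := -(1/2 : ℝ) * Δt / ρ with hc
  have hρ' : ρ ≠ 0 := hρ.ne'
  have hΔt' : Δt ≠ 0 := hΔt.ne'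
  -- rewrite the self inner product integral
  have hself : (∫ x in Ω, (inner ℝ (w x) (w x) : ℝ)) = ∫ x in Ω, ‖w x‖ ^ 2 := by
    refine integral_congr_ae (Filter.Eventually.of_forall fun x => ?_)
    exact real_inner_self_eq_norm_sq (w x)
  -- q * dw integral = dw * q integral
  have hqdw : (∫ x in Ω, q x * dw x) = ∫ x in Ω, dw x * q x := by
    refine integral_congr_ae (Filter.Eventually.of_forall fun x => ?_)
    exact mul_comm _ _
  -- inner ℝ (w x) (u' x)
  have hwu : (∫ x in Ω, (inner ℝ (w x) (u' x) : ℝ))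
      = c * (ρ / Δt) * (∫ x in Ω, ‖w x‖ ^ 2) + c * α * (∫ x in Ω, (inner ℝ (w x) (gq x) : ℝ)) := by
    have : (fun x => (inner ℝ (w x) (u' x) : ℝ))
        = fun x => (c * (ρ / Δt)) * ‖w x‖ ^ 2 + (c * α) * (inner ℝ (w x) (gq x) : ℝ) := by
      funext x
      simp only [hu', inner_smul_right, inner_add_right, real_inner_self_eq_norm_sq]
      ring
    rw [this, integral_add (hww.const_mul _) (hwg.const_mul _),
      integral_const_mul, integral_const_mul]
  -- inner ℝ (gq x) (u' x)
  have hgu : (∫ x in Ω, (inner ℝ (gq x) (u' x) : ℝ))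
      = c * (ρ / Δt) * (∫ x in Ω, (inner ℝ (w x) (gq x) : ℝ)) + c * α * (∫ x in Ω, ‖gq x‖ ^ 2) := by
    have : (fun x => (inner ℝ (gq x) (u' x) : ℝ))
        = fun x => (c * (ρ / Δt)) * (inner ℝ (w x) (gq x) : ℝ) + (c * α) * ‖gq x‖ ^ 2 := by
      funext x
      simp only [hu', inner_smul_right, inner_add_right, real_inner_self_eq_norm_sq]
      rw [real_inner_comm (gq x) (w x)]
      ring
    rw [this, integral_add (hwg.const_mul _) (hgg.const_mul _),
      integral_const_mul, integral_const_mul]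
  set I1 := ∫ x in Ω, ‖w x‖ ^ 2 with hI1
  set I2 := ∫ x in Ω, ‖gq x‖ ^ 2 with hI2
  have hBval : B = (1/2) * (ρ / Δt) * I1 + (1/2) * (Δt / ρ) * α ^ 2 * I2 := by
    rw [hB, hself, hqdw, hwu, hgu, hc]
    field_simp
    ring
  have hI1nn : 0 ≤ I1 := integral_nonneg fun x => by positivity
  have hI2nn : 0 ≤ I2 := integral_nonneg fun x => by positivity
  have hc1 : 0 < (1/2) * (ρ / Δt) := by positivity
  have hc2 : 0 < (1/2) * (Δt / ρ) * α ^ 2 := by positivity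
  have hBnn : 0 ≤ B := by
    rw [hBval]
    exact add_nonneg (mul_nonneg hc1.le hI1nn) (mul_nonneg hc2.le hI2nn)
  refine ⟨hBval, hBnn, fun hB0 => ?_⟩
  rw [hBval] at hB0
  have ht1 : (1/2) * (ρ / Δt) * I1 = 0 := by
    linarith [mul_nonneg hc1.le hI1nn, mul_nonneg hc2.le hI2nn]
  have ht2 : (1/2) * (Δt / ρ) * α ^ 2 * I2 = 0 := by
    linarith [mul_nonneg hc1.le hI1nn, mul_nonneg hc2.le hI2nn]
  have hI1z : I1 = 0 := (mul_eq_zero.mp ht1).resolve_left hc1.ne'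
  have hI2z : I2 = 0 := (mul_eq_zero.mp ht2).resolve_left hc2.ne'
  constructor
  · have := (integral_eq_zero_iff_of_nonneg
      (fun x => by positivity : ∀ x, (0:ℝ) ≤ ‖w x‖ ^ 2) hww).mp hI1z
    filter_upwards [this] with x hx
    have : ‖w x‖ ^ 2 = 0 := hx
    have : ‖w x‖ = 0 := by nlinarith [norm_nonneg (w x)]
    simpa using this
  · have := (integral_eq_zero_iff_of_nonneg
      (fun x => by positivity : ∀ x, (0:ℝ) ≤ ‖gq x‖ ^ 2) hgg).mp hI2z
    filter_upwards [this] with x hx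
    have : ‖gq x‖ ^ 2 = 0 := hx
    have : ‖gq x‖ = 0 := by nlinarith [norm_nonneg (gq x)]
    simpa using this
end

section
/- For the forward Euler scheme (HERK(1,1)), the amplification factor of the fully discrete RK(1,1)-VMS scheme reduces to ζʰ = 1 + λ₁ + λ₂, and in particular it is an affine function of the stabilization parameter τ*-dependent coefficients that is independent of τ* when λ₁ + λ₂ is evaluated: specifically λ₁ + λ₂ is independent of τ* (the τ*-dependent contributions in λ₁ and λ₂ cancel exactly). -/
open Real

/-- for the RK(1,1)-VMS (forward Euler) scheme the amplification
factor is `ζʰ = 1 + λ₁ + λ₂`, and the `τ*`-dependent contributions in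
`λ₁` and `λ₂` cancel exactly: `λ₁ + λ₂` is independent of `τ*`, being equal to
`(20κ*cos 2K* + 40κ*cos K* − 60κ* − i(5a*sin 2K* + 50a*sin K*)) /
 (cos 2K* + 26 cos K* + 33)`. -/
theorem rk11_vms_amplification_tau_independent
    (K a κ : ℝ)
    (C : ℝ → ℝ)
    (hC : C = fun τ => (1 - τ) * (Real.cos (2*K) + 26 * Real.cos K + 33))
    (lam₁ lam₂ : ℝ → ℂ)
    (h₁ : lam₁ = fun τ =>
      (((20*τ*κ * Real.cos (2*K) + 40*τ*κ * Real.cos K - 60*τ*κ : ℝ) : ℂ)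
        + ((-5*τ*a * Real.sin (2*K) - 50*τ*a * Real.sin K : ℝ) : ℂ) * Complex.I)
        / ((C τ : ℝ) : ℂ))
    (h₂ : lam₂ = fun τ =>
      ((((-40*τ*κ + 20*κ) * Real.cos (2*K) + (-80*τ*κ + 40*κ) * Real.cos K
          + 120*τ*κ - 60*κ : ℝ) : ℂ)
        + (((10*τ*a - 5*a) * Real.sin (2*K) + (100*τ*a - 50*a) * Real.sin K : ℝ) : ℂ)
          * Complex.I)
        / ((C τ : ℝ) : ℂ))
    (hden : Real.cos (2*K) + 26 * Real.cos K + 33 ≠ 0) :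
    (∀ τ : ℝ, τ ≠ 1 →
      lam₁ τ + lam₂ τ =
        (((20*κ * Real.cos (2*K) + 40*κ * Real.cos K - 60*κ : ℝ) : ℂ)
          + ((-(5*a * Real.sin (2*K) + 50*a * Real.sin K) : ℝ) : ℂ) * Complex.I)
          / ((Real.cos (2*K) + 26 * Real.cos K + 33 : ℝ) : ℂ)) ∧
    (∀ τ τ' : ℝ, τ ≠ 1 → τ' ≠ 1 →
      1 + lam₁ τ + lam₂ τ = 1 + lam₁ τ' + lam₂ τ') := by
  subst hC h₁ h₂
  have key : ∀ τ : ℝ, τ ≠ 1 →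
      ((((20*τ*κ * Real.cos (2*K) + 40*τ*κ * Real.cos K - 60*τ*κ : ℝ) : ℂ)
        + ((-5*τ*a * Real.sin (2*K) - 50*τ*a * Real.sin K : ℝ) : ℂ) * Complex.I)
        / ((((1 - τ) * (Real.cos (2*K) + 26 * Real.cos K + 33) : ℝ)) : ℂ))
      + (((((-40*τ*κ + 20*κ) * Real.cos (2*K) + (-80*τ*κ + 40*κ) * Real.cos K
          + 120*τ*κ - 60*κ : ℝ) : ℂ)
        + (((10*τ*a - 5*a) * Real.sin (2*K) + (100*τ*a - 50*a) * Real.sin K : ℝ) : ℂ)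
          * Complex.I)
        / ((((1 - τ) * (Real.cos (2*K) + 26 * Real.cos K + 33) : ℝ)) : ℂ)) =
      (((20*κ * Real.cos (2*K) + 40*κ * Real.cos K - 60*κ : ℝ) : ℂ)
          + ((-(5*a * Real.sin (2*K) + 50*a * Real.sin K) : ℝ) : ℂ) * Complex.I)
          / ((Real.cos (2*K) + 26 * Real.cos K + 33 : ℝ) : ℂ) := by
    intro τ hτ
    have h1 : ((1 - τ : ℝ) : ℂ) ≠ 0 := by
      rw [Complex.ofReal_ne_zero]
      exact sub_ne_zero.mpr (fun h => hτ h.symm)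
    rw [← add_div, Complex.ofReal_mul, mul_comm (((1 - τ : ℝ)) : ℂ)]
    rw [show ((((20*τ*κ * Real.cos (2*K) + 40*τ*κ * Real.cos K - 60*τ*κ : ℝ) : ℂ)
        + ((-5*τ*a * Real.sin (2*K) - 50*τ*a * Real.sin K : ℝ) : ℂ) * Complex.I)
      + ((((-40*τ*κ + 20*κ) * Real.cos (2*K) + (-80*τ*κ + 40*κ) * Real.cos K
          + 120*τ*κ - 60*κ : ℝ) : ℂ)
        + (((10*τ*a - 5*a) * Real.sin (2*K) + (100*τ*a - 50*a) * Real.sin K : ℝ) : ℂ)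
          * Complex.I)) =
      ((((20*κ * Real.cos (2*K) + 40*κ * Real.cos K - 60*κ : ℝ) : ℂ)
          + ((-(5*a * Real.sin (2*K) + 50*a * Real.sin K) : ℝ) : ℂ) * Complex.I)
        * (((1 - τ : ℝ)) : ℂ)) from by push_cast; ring]
    rw [mul_div_mul_right _ _ h1]
  refine ⟨fun τ hτ => key τ hτ, fun τ τ' h h' => ?_⟩
  beta_reduce
  rw [add_assoc (1:ℂ), add_assoc (1:ℂ), key τ h, key τ' h']
end
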